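/- arXiv:1210.1757 — 3 statements merged into one kernel-verified Lean document; each statement's English description precedes it below -/
import Mathlib

section
/- Fix a real v > 1/2 and a tie-breaking rule. Let μ be a mixed strategy for AND with marginal CDFs F₁ x = μ{p : p.1 ≤ x} and F₂ y = μ{p : p.2 ≤ y}, and let μ' be a mixed strategy with the same marginals satisfying μ'{p : p.1 ≤ x and p.2 ≤ y} = min (F₁ x) (F₂ y) for all x, y. If (μ, ν) is a mixed Nash equilibrium of the AND–OR game, then (μ', ν) is also a mixed Nash equilibrium, and it produces the same outcomes: U_and(μ',ν) = U_and(μ,ν), U_or(μ',ν) = U_or(μ,ν), ∫ q₁·q₂ d(μ'.prod ν) = ∫ q₁·q₂ d(μ.prod ν), ∫ (a₁·q₁ + a₂·q₂) d(μ'.prod ν) = ∫ (a₁·q₁ + a₂·q₂) d(μ.prod ν), and ∫ (b₁·(1−q₁) + b₂·(1−q₂)) d(μ'.prod ν) = ∫ (b₁·(1−q₁) + b₂·(1−q₂)) d(μ.prod ν). -/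
open MeasureTheory Set
open scoped ENNReal

noncomputable section

/-- A bid profile for one player: a bid on each of the two items. -/
abbrev Bid := ℝ × ℝ

/-- The maximum allowed bid `H = max 1 v`. -/
def Hval (v : ℝ) : ℝ := max 1 v

/-- The set of allowed bids `[0,H] × [0,H]`. -/
def box (v : ℝ) : Set Bid := Icc (0:ℝ) (Hval v) ×ˢ Icc (0:ℝ) (Hval v)

/-- A tie-breaking rule: measurable functions `t₁ t₂ : ℝ → [0,1]`, where `tᵢ x` is the
probability that AND wins item `i` when both players bid `x` on it. -/
structure TieRule where
  t1 : ℝ → ℝ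
  t2 : ℝ → ℝ
  meas1 : Measurable t1
  meas2 : Measurable t2
  t1_nonneg : ∀ x, 0 ≤ t1 x
  t1_le_one : ∀ x, t1 x ≤ 1
  t2_nonneg : ∀ x, 0 ≤ t2 x
  t2_le_one : ∀ x, t2 x ≤ 1

/-- Probability that AND wins item 1 with bids `a` (AND) and `b` (OR). -/
def q1 (T : TieRule) (a b : Bid) : ℝ :=
  if b.1 < a.1 then 1 else if a.1 = b.1 then T.t1 a.1 else 0

/-- Probability that AND wins item 2 with bids `a` (AND) and `b` (OR). -/
def q2 (T : TieRule) (a b : Bid) : ℝ :=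
  if b.2 < a.2 then 1 else if a.2 = b.2 then T.t2 a.2 else 0

/-- Expected utility of the AND player at the pure profile `(a,b)`. -/
def uAnd (T : TieRule) (a b : Bid) : ℝ :=
  q1 T a b * q2 T a b - a.1 * q1 T a b - a.2 * q2 T a b

/-- Expected utility of the OR player at the pure profile `(a,b)`. -/
def uOr (v : ℝ) (T : TieRule) (a b : Bid) : ℝ :=
  v * (1 - q1 T a b * q2 T a b) - b.1 * (1 - q1 T a b) - b.2 * (1 - q2 T a b)

/-- A mixed strategy: a Borel probability measure on `ℝ × ℝ` supported in the box. -/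
def IsMixed (v : ℝ) (μ : Measure Bid) : Prop :=
  IsProbabilityMeasure μ ∧ μ (box v) = 1

/-- Expected utility of AND under mixed strategies. -/
def UAnd (T : TieRule) (μ ν : Measure Bid) : ℝ :=
  ∫ p, uAnd T p.1 p.2 ∂(μ.prod ν)

/-- Expected utility of OR under mixed strategies. -/
def UOr (v : ℝ) (T : TieRule) (μ ν : Measure Bid) : ℝ :=
  ∫ p, uOr v T p.1 p.2 ∂(μ.prod ν)

/-- `(μ,ν)` is a mixed Nash equilibrium of the AND–OR game. -/
def IsNash (v : ℝ) (T : TieRule) (μ ν : Measure Bid) : Prop :=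
  IsMixed v μ ∧ IsMixed v ν ∧
  (∀ a ∈ box v, (∫ b, uAnd T a b ∂ν) ≤ UAnd T μ ν) ∧
  (∀ b ∈ box v, (∫ a, uOr v T a b ∂μ) ≤ UOr v T μ ν)

/-- The uniform probability measure on `[0,1] ⊆ ℝ`. -/
def P01 : Measure ℝ := volume.restrict (Icc (0:ℝ) 1)

/-- The OR equilibrium strategy `ν*`: bid `(x,0)` or `(0,x)` with probability `1/2` each,
where `x ∈ [0,1/2]` has CDF `x/(1-x)`. -/
def nuStar : Measure Bid :=
  (1/2 : ℝ≥0∞) • Measure.map (fun u => (u/(1+u), (0:ℝ))) P01 +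
  (1/2 : ℝ≥0∞) • Measure.map (fun u => ((0:ℝ), u/(1+u))) P01

/-- Inverse-CDF map for the AND equilibrium bid distribution. -/
def gAnd (v u : ℝ) : ℝ := if 0 < u then max 0 (v - (v - 1/2)/u) else 0

/-- The AND equilibrium strategy `μ*`: bid `(y,y)` where `y ∈ [0,1/2]` has CDF
`(v-1/2)/(v-y)`, with an atom of mass `1 - 1/(2v)` at `0`. -/
def muStar (v : ℝ) : Measure Bid := Measure.map (fun u => (gAnd v u, gAnd v u)) P01

/-!
Against a fixed OR bid `b`, AND wins item `i` with probability
`tᵢ · 1[aᵢ ≥ bᵢ] + (1 - tᵢ) · 1[aᵢ > bᵢ]`, so it wins both items with probability a nonnegative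
combination of the masses of four upper orthants. With the marginals fixed, inclusion–exclusion
trades the mass of an upper orthant for that of the complementary lower orthant, which the
comonotone coupling `μ'` maximises. So `μ'` wins weakly more often than `μ` against every OR
strategy, while the payments, which depend on AND's bid one coordinate at a time, are unchanged.
Hence `UAnd μ ν ≤ UAnd μ' ν`; the equilibrium condition gives the reverse inequality, so the
allocations and all utilities coincide, and no OR deviation fares better against `μ'` than
against `μ`.
-/

section Orthants

variable {α β : Type*} [MeasurableSpace α] [MeasurableSpace β]

theorem measure_prod_add_compl_add_compl (κ : Measure (α × β)) {U : Set α} {V : Set β}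
    (hU : MeasurableSet U) (hV : MeasurableSet V) :
    κ (U ×ˢ V) + κ (Prod.fst ⁻¹' Uᶜ) + κ (Prod.snd ⁻¹' Vᶜ) = κ univ + κ (Uᶜ ×ˢ Vᶜ) := by
  rw [prod_eq, prod_eq, preimage_compl, preimage_compl, add_assoc,
    ← measure_union_add_inter _ (measurable_snd hV).compl, ← compl_inter, ← add_assoc,
    measure_add_measure_compl ((measurable_fst hU).inter (measurable_snd hV))]

theorem measure_prod_le_of_compl_prod_le {μ μ' : Measure (α × β)} [IsFiniteMeasure μ']
    (h1 : μ.map Prod.fst = μ'.map Prod.fst) (h2 : μ.map Prod.snd = μ'.map Prod.snd)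
    {U : Set α} {V : Set β} (hU : MeasurableSet U) (hV : MeasurableSet V)
    (h : μ (Uᶜ ×ˢ Vᶜ) ≤ μ' (Uᶜ ×ˢ Vᶜ)) : μ (U ×ˢ V) ≤ μ' (U ×ˢ V) := by
  have huniv : μ univ = μ' univ := by
    simpa [Measure.map_apply measurable_fst MeasurableSet.univ] using congrArg (· univ) h1
  have hfst : μ (Prod.fst ⁻¹' Uᶜ) = μ' (Prod.fst ⁻¹' Uᶜ) := by
    rw [← Measure.map_apply measurable_fst hU.compl, h1,
      Measure.map_apply measurable_fst hU.compl]
  have hsnd : μ (Prod.snd ⁻¹' Vᶜ) = μ' (Prod.snd ⁻¹' Vᶜ) := by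
    rw [← Measure.map_apply measurable_snd hV.compl, h2,
      Measure.map_apply measurable_snd hV.compl]
  refine ENNReal.le_of_add_le_add_right (ENNReal.add_ne_top.2
    ⟨measure_ne_top μ' (Prod.fst ⁻¹' Uᶜ), measure_ne_top μ' (Prod.snd ⁻¹' Vᶜ)⟩) ?_
  calc μ (U ×ˢ V) + (μ' (Prod.fst ⁻¹' Uᶜ) + μ' (Prod.snd ⁻¹' Vᶜ))
      = μ univ + μ (Uᶜ ×ˢ Vᶜ) := by
        rw [← hfst, ← hsnd, ← add_assoc, measure_prod_add_compl_add_compl μ hU hV]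
    _ ≤ μ' univ + μ' (Uᶜ ×ˢ Vᶜ) := by rw [huniv]; gcongr
    _ = μ' (U ×ˢ V) + (μ' (Prod.fst ⁻¹' Uᶜ) + μ' (Prod.snd ⁻¹' Vᶜ)) := by
        rw [← add_assoc, measure_prod_add_compl_add_compl μ' hU hV]

theorem integral_indicator_comb_mul (κ : Measure (α × β)) [IsFiniteMeasure κ]
    {U U' : Set α} {V V' : Set β} (hU : MeasurableSet U) (hU' : MeasurableSet U')
    (hV : MeasurableSet V) (hV' : MeasurableSet V') (x x' y y' : ℝ) :
    ∫ p, (x * U.indicator 1 p.1 + x' * U'.indicator 1 p.1) *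
        (y * V.indicator 1 p.2 + y' * V'.indicator 1 p.2) ∂κ =
      x * y * κ.real (U ×ˢ V) + x * y' * κ.real (U ×ˢ V') +
        x' * y * κ.real (U' ×ˢ V) + x' * y' * κ.real (U' ×ˢ V') := by
  have hint : ∀ {A : Set α} {B : Set β}, MeasurableSet A → MeasurableSet B → ∀ z : ℝ,
      Integrable (fun p => z * (A ×ˢ B).indicator 1 p) κ := fun hA hB z =>
    ((integrable_const (1 : ℝ)).indicator (hA.prod hB)).const_mul z
  have := hint hU hV (x * y); have := hint hU hV' (x * y')
  have := hint hU' hV (x' * y); have := hint hU' hV' (x' * y')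
  have hexpand : ∀ p : α × β, (x * U.indicator 1 p.1 + x' * U'.indicator 1 p.1) *
      (y * V.indicator 1 p.2 + y' * V'.indicator 1 p.2) =
        x * y * (U ×ˢ V).indicator 1 p + x * y' * (U ×ˢ V').indicator 1 p +
          x' * y * (U' ×ˢ V).indicator 1 p + x' * y' * (U' ×ˢ V').indicator 1 p := by
    rintro ⟨a, b⟩
    simp only [indicator_prod_one]
    ring
  simp_rw [hexpand]
  rw [integral_add, integral_add, integral_add]
  · simp only [integral_const_mul, integral_indicator_one (hU.prod hV),
      integral_indicator_one (hU.prod hV'), integral_indicator_one (hU'.prod hV),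
      integral_indicator_one (hU'.prod hV')]
  all_goals fun_prop

theorem integral_prod_comp_congr {γ : Type*} [MeasurableSpace γ] {μ μ' : Measure α}
    {ν : Measure β} [SFinite μ] [SFinite μ'] [SFinite ν]
    {f : α → γ} (hf : Measurable f) (h : μ.map f = μ'.map f) {φ : γ × β → ℝ}
    (hφ : Measurable φ) :
    ∫ p, φ (f p.1, p.2) ∂(μ.prod ν) = ∫ p, φ (f p.1, p.2) ∂(μ'.prod ν) := by
  have key : ∀ (κ : Measure α) [SFinite κ],
      ∫ p, φ (f p.1, p.2) ∂(κ.prod ν) = ∫ q, φ q ∂((κ.map f).prod ν) := by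
    intro κ _
    have hmap : (κ.map f).prod ν = (κ.prod ν).map (Prod.map f id) := by
      simpa using Measure.map_prod_map κ ν hf measurable_id
    rw [hmap, integral_map (hf.prodMap measurable_id).aemeasurable hφ.aestronglyMeasurable]
    rfl
  rw [key μ, key μ', h]

end Orthants

/-- `μ'` is the comonotone coupling of the marginals of `μ`: its joint distribution function is
the Fréchet–Hoeffding upper bound. -/
def IsMaxCorrelated (μ μ' : Measure (ℝ × ℝ)) : Prop :=
  ∀ x y : ℝ, μ' {p | p.1 ≤ x ∧ p.2 ≤ y} = min (μ {p | p.1 ≤ x}) (μ {p | p.2 ≤ y})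

theorem exists_monotone_iUnion_Iic_eq {S : Set ℝ} (hS : ∃ c, S = Iic c ∨ S = Iio c) :
    ∃ f : ℕ → ℝ, Monotone f ∧ ⋃ n, Iic (f n) = S := by
  obtain ⟨c, rfl | rfl⟩ := hS
  · exact ⟨fun _ => c, monotone_const, iUnion_const _⟩
  · obtain ⟨f, hf, hlt, hlim⟩ := exists_seq_strictMono_tendsto c
    exact ⟨f, hf.monotone, iUnion_Iic_eq_Iio_of_lt_of_tendsto hlt hlim⟩

namespace IsMaxCorrelated

variable {μ μ' : Measure (ℝ × ℝ)}

theorem measure_iUnion_Iic_prod_le (h : IsMaxCorrelated μ μ') {f g : ℕ → ℝ}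
    (hf : Monotone f) (hg : Monotone g) :
    μ ((⋃ n, Iic (f n)) ×ˢ ⋃ n, Iic (g n)) ≤ μ' ((⋃ n, Iic (f n)) ×ˢ ⋃ n, Iic (g n)) := by
  have hf' : Monotone fun n => Iic (f n) := fun _ _ hmn => Iic_subset_Iic.2 (hf hmn)
  have hg' : Monotone fun n => Iic (g n) := fun _ _ hmn => Iic_subset_Iic.2 (hg hmn)
  have hmono : Monotone fun n => Iic (f n) ×ˢ Iic (g n) := fun _ _ hmn =>
    prod_mono (hf' hmn) (hg' hmn)
  rw [← iUnion_prod_of_monotone hf' hg', hmono.measure_iUnion, hmono.measure_iUnion]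
  refine iSup_mono fun n => ?_
  calc μ (Iic (f n) ×ˢ Iic (g n))
      ≤ min (μ {p | p.1 ≤ f n}) (μ {p | p.2 ≤ g n}) :=
        le_min (measure_mono fun _ hp => hp.1) (measure_mono fun _ hp => hp.2)
    _ = μ' (Iic (f n) ×ˢ Iic (g n)) := (h _ _).symm

theorem measure_lower_prod_le (h : IsMaxCorrelated μ μ') {S T : Set ℝ}
    (hS : ∃ c, S = Iic c ∨ S = Iio c) (hT : ∃ d, T = Iic d ∨ T = Iio d) :
    μ (S ×ˢ T) ≤ μ' (S ×ˢ T) := by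
  obtain ⟨f, hf, rfl⟩ := exists_monotone_iUnion_Iic_eq hS
  obtain ⟨g, hg, rfl⟩ := exists_monotone_iUnion_Iic_eq hT
  exact h.measure_iUnion_Iic_prod_le hf hg

theorem measure_upper_prod_le [IsFiniteMeasure μ'] (h : IsMaxCorrelated μ μ')
    (h1 : μ.map Prod.fst = μ'.map Prod.fst) (h2 : μ.map Prod.snd = μ'.map Prod.snd)
    {U V : Set ℝ} (hU : ∃ c, U = Ici c ∨ U = Ioi c) (hV : ∃ d, V = Ici d ∨ V = Ioi d) :
    μ (U ×ˢ V) ≤ μ' (U ×ˢ V) := by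
  have hcompl : ∀ {U : Set ℝ}, (∃ c, U = Ici c ∨ U = Ioi c) →
      MeasurableSet U ∧ ∃ c, Uᶜ = Iic c ∨ Uᶜ = Iio c := by
    rintro _ ⟨c, rfl | rfl⟩
    · exact ⟨measurableSet_Ici, c, Or.inr compl_Ici⟩
    · exact ⟨measurableSet_Ioi, c, Or.inl compl_Ioi⟩
  obtain ⟨hUm, hUc⟩ := hcompl hU
  obtain ⟨hVm, hVc⟩ := hcompl hV
  exact measure_prod_le_of_compl_prod_le h1 h2 hUm hVm (h.measure_lower_prod_le hUc hVc)

end IsMaxCorrelated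

section Game

variable {v : ℝ} {T : TieRule}

theorem q1_mem_Icc (T : TieRule) (a b : Bid) : q1 T a b ∈ Icc (0 : ℝ) 1 := by
  unfold q1
  split_ifs <;> simp [T.t1_nonneg, T.t1_le_one]

theorem q2_mem_Icc (T : TieRule) (a b : Bid) : q2 T a b ∈ Icc (0 : ℝ) 1 := by
  unfold q2
  split_ifs <;> simp [T.t2_nonneg, T.t2_le_one]

theorem q1_eq_indicator (T : TieRule) (a b : Bid) :
    q1 T a b =
      T.t1 b.1 * (Ici b.1).indicator 1 a.1 + (1 - T.t1 b.1) * (Ioi b.1).indicator 1 a.1 := by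
  rcases lt_trichotomy b.1 a.1 with h | h | h
  · simp [q1, h, h.le]
  · simp [q1, h]
  · simp [q1, h.not_ge, h.ne, h.not_gt]

theorem q2_eq_indicator (T : TieRule) (a b : Bid) :
    q2 T a b =
      T.t2 b.2 * (Ici b.2).indicator 1 a.2 + (1 - T.t2 b.2) * (Ioi b.2).indicator 1 a.2 := by
  rcases lt_trichotomy b.2 a.2 with h | h | h
  · simp [q2, h, h.le]
  · simp [q2, h]
  · simp [q2, h.not_ge, h.ne, h.not_gt]

@[fun_prop]
theorem Measurable.q1 {γ : Type*} [MeasurableSpace γ] {f g : γ → Bid} (hf : Measurable f)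
    (hg : Measurable g) : Measurable fun x => q1 T (f x) (g x) :=
  Measurable.ite (measurableSet_lt hg.fst hf.fst) measurable_const
    (Measurable.ite (measurableSet_eq_fun hf.fst hg.fst) (T.meas1.comp hf.fst) measurable_const)

@[fun_prop]
theorem Measurable.q2 {γ : Type*} [MeasurableSpace γ] {f g : γ → Bid} (hf : Measurable f)
    (hg : Measurable g) : Measurable fun x => q2 T (f x) (g x) :=
  Measurable.ite (measurableSet_lt hg.snd hf.snd) measurable_const
    (Measurable.ite (measurableSet_eq_fun hf.snd hg.snd) (T.meas2.comp hf.snd) measurable_const)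

theorem IsMaxCorrelated.integral_q1_mul_q2_le {μ μ' : Measure Bid} [IsFiniteMeasure μ]
    [IsFiniteMeasure μ'] (h : IsMaxCorrelated μ μ') (h1 : μ.map Prod.fst = μ'.map Prod.fst)
    (h2 : μ.map Prod.snd = μ'.map Prod.snd) (T : TieRule) (b : Bid) :
    ∫ a, q1 T a b * q2 T a b ∂μ ≤ ∫ a, q1 T a b * q2 T a b ∂μ' := by
  have rect : ∀ {U V : Set ℝ}, (∃ c, U = Ici c ∨ U = Ioi c) → (∃ d, V = Ici d ∨ V = Ioi d) →
      μ.real (U ×ˢ V) ≤ μ'.real (U ×ˢ V) := fun hU hV =>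
    ENNReal.toReal_mono (measure_ne_top μ' _) (h.measure_upper_prod_le h1 h2 hU hV)
  simp only [q1_eq_indicator, q2_eq_indicator]
  rw [integral_indicator_comb_mul μ measurableSet_Ici measurableSet_Ioi measurableSet_Ici
      measurableSet_Ioi, integral_indicator_comb_mul μ' measurableSet_Ici measurableSet_Ioi
      measurableSet_Ici measurableSet_Ioi]
  have := T.t1_nonneg b.1; have := T.t1_le_one b.1
  have := T.t2_nonneg b.2; have := T.t2_le_one b.2
  gcongr ?_ + ?_ + ?_ + ?_ <;>
    refine mul_le_mul_of_nonneg_left (rect ?_ ?_) (mul_nonneg (by linarith) (by linarith)) <;>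
    first | exact ⟨_, .inl rfl⟩ | exact ⟨_, .inr rfl⟩

theorem measurableSet_box (v : ℝ) : MeasurableSet (box v) :=
  measurableSet_Icc.prod measurableSet_Icc

theorem IsMixed.ae_mem_box {κ : Measure Bid} (hκ : IsMixed v κ) : ∀ᵐ a ∂κ, a ∈ box v := by
  have := hκ.1
  rw [ae_mem_iff_measure_eq (measurableSet_box v).nullMeasurableSet, hκ.2, measure_univ]

theorem isMixed_dirac {b : Bid} (hb : b ∈ box v) : IsMixed v (Measure.dirac b) :=
  ⟨inferInstance, Measure.dirac_apply_of_mem hb⟩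

theorem integrable_mul_of_mem_box {κ ν : Measure Bid} (hκ : IsMixed v κ) (hν : IsMixed v ν)
    {c g : Bid × Bid → ℝ} (hc : Measurable c) (hg : Measurable g)
    (hcH : ∀ p : Bid × Bid, p.1 ∈ box v → p.2 ∈ box v → c p ∈ Icc 0 (Hval v))
    (hg1 : ∀ p, g p ∈ Icc (0 : ℝ) 1) : Integrable (fun p => c p * g p) (κ.prod ν) := by
  have := hκ.1; have := hν.1
  have hbox : ∀ᵐ p ∂(κ.prod ν), p ∈ box v ×ˢ box v := by
    rw [ae_mem_iff_measure_eq
      ((measurableSet_box v).prod (measurableSet_box v)).nullMeasurableSet, Measure.prod_prod,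
      hκ.2, hν.2, measure_univ, one_mul]
  refine Integrable.of_bound (hc.mul hg).aestronglyMeasurable (Hval v) ?_
  filter_upwards [hbox] with p ⟨hp₁, hp₂⟩
  obtain ⟨hc0, hcH⟩ := hcH p hp₁ hp₂
  obtain ⟨hg0, hg1⟩ := hg1 p
  rw [Real.norm_eq_abs, abs_of_nonneg (mul_nonneg hc0 hg0)]
  exact (mul_le_of_le_one_right hc0 hg1).trans hcH

theorem integrable_q1_mul_q2 {κ ν : Measure Bid} [IsFiniteMeasure κ] [IsFiniteMeasure ν]
    (T : TieRule) :
    Integrable (fun p : Bid × Bid => q1 T p.1 p.2 * q2 T p.1 p.2) (κ.prod ν) := by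
  refine Integrable.of_bound (by fun_prop : Measurable _).aestronglyMeasurable 1
    (ae_of_all _ fun p => ?_)
  obtain ⟨h1₀, h1₁⟩ := q1_mem_Icc T p.1 p.2
  obtain ⟨h2₀, h2₁⟩ := q2_mem_Icc T p.1 p.2
  rw [Real.norm_eq_abs, abs_of_nonneg (mul_nonneg h1₀ h2₀)]
  exact mul_le_one₀ h1₁ h2₀ h2₁

section Payments

variable {κ ν : Measure Bid}

theorem integrable_fst_fst_mul_q1 (hκ : IsMixed v κ) (hν : IsMixed v ν) :
    Integrable (fun p : Bid × Bid => p.1.1 * q1 T p.1 p.2) (κ.prod ν) :=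
  integrable_mul_of_mem_box hκ hν (by fun_prop) (by fun_prop) (fun _ ha _ => ha.1)
    fun p => q1_mem_Icc T p.1 p.2

theorem integrable_fst_snd_mul_q2 (hκ : IsMixed v κ) (hν : IsMixed v ν) :
    Integrable (fun p : Bid × Bid => p.1.2 * q2 T p.1 p.2) (κ.prod ν) :=
  integrable_mul_of_mem_box hκ hν (by fun_prop) (by fun_prop) (fun _ ha _ => ha.2)
    fun p => q2_mem_Icc T p.1 p.2

theorem integrable_snd_fst_mul_one_sub_q1 (hκ : IsMixed v κ) (hν : IsMixed v ν) :
    Integrable (fun p : Bid × Bid => p.2.1 * (1 - q1 T p.1 p.2)) (κ.prod ν) :=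
  integrable_mul_of_mem_box hκ hν (by fun_prop) (by fun_prop) (fun _ _ hb => hb.1)
    fun p => ⟨sub_nonneg.2 (q1_mem_Icc T _ _).2, sub_le_self _ (q1_mem_Icc T _ _).1⟩

theorem integrable_snd_snd_mul_one_sub_q2 (hκ : IsMixed v κ) (hν : IsMixed v ν) :
    Integrable (fun p : Bid × Bid => p.2.2 * (1 - q2 T p.1 p.2)) (κ.prod ν) :=
  integrable_mul_of_mem_box hκ hν (by fun_prop) (by fun_prop) (fun _ _ hb => hb.2)
    fun p => ⟨sub_nonneg.2 (q2_mem_Icc T _ _).2, sub_le_self _ (q2_mem_Icc T _ _).1⟩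

theorem integrable_andPayment (hκ : IsMixed v κ) (hν : IsMixed v ν) :
    Integrable (fun p : Bid × Bid => p.1.1 * q1 T p.1 p.2 + p.1.2 * q2 T p.1 p.2) (κ.prod ν) :=
  (integrable_fst_fst_mul_q1 hκ hν).add (integrable_fst_snd_mul_q2 hκ hν)

theorem integrable_orPayment (hκ : IsMixed v κ) (hν : IsMixed v ν) :
    Integrable (fun p : Bid × Bid => p.2.1 * (1 - q1 T p.1 p.2) + p.2.2 * (1 - q2 T p.1 p.2))
      (κ.prod ν) :=
  (integrable_snd_fst_mul_one_sub_q1 hκ hν).add (integrable_snd_snd_mul_one_sub_q2 hκ hν)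

end Payments

end Game

def allocation (T : TieRule) (μ ν : Measure Bid) : ℝ :=
  ∫ p, q1 T p.1 p.2 * q2 T p.1 p.2 ∂(μ.prod ν)

def andPayment (T : TieRule) (μ ν : Measure Bid) : ℝ :=
  ∫ p, (p.1.1 * q1 T p.1 p.2 + p.1.2 * q2 T p.1 p.2) ∂(μ.prod ν)

def orPayment (T : TieRule) (μ ν : Measure Bid) : ℝ :=
  ∫ p, (p.2.1 * (1 - q1 T p.1 p.2) + p.2.2 * (1 - q2 T p.1 p.2)) ∂(μ.prod ν)

section Equilibrium

variable {v : ℝ} {T : TieRule} {κ μ μ' ν : Measure Bid}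

theorem UAnd_eq_allocation_sub_andPayment (hκ : IsMixed v κ) (hν : IsMixed v ν) :
    UAnd T κ ν = allocation T κ ν - andPayment T κ ν := by
  have := hκ.1; have := hν.1
  rw [UAnd, allocation, andPayment,
    ← integral_sub (integrable_q1_mul_q2 T) (integrable_andPayment hκ hν)]
  congr 1 with p
  simp only [uAnd]
  ring

theorem UOr_eq_sub_allocation_sub_orPayment (hκ : IsMixed v κ) (hν : IsMixed v ν) :
    UOr v T κ ν = v - v * allocation T κ ν - orPayment T κ ν := by
  have := hκ.1; have := hν.1
  have hpt : UOr v T κ ν = ∫ p, (v - (v * (q1 T p.1 p.2 * q2 T p.1 p.2) +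
      (p.2.1 * (1 - q1 T p.1 p.2) + p.2.2 * (1 - q2 T p.1 p.2)))) ∂(κ.prod ν) := by
    unfold UOr uOr
    congr 1 with p
    ring
  rw [hpt, integral_sub (integrable_const v) ?_,
    integral_add ((integrable_q1_mul_q2 T).const_mul v) (integrable_orPayment hκ hν),
    integral_const_mul, integral_const, probReal_univ, one_smul, allocation, orPayment]
  · ring
  · exact ((integrable_q1_mul_q2 T).const_mul v).add (integrable_orPayment hκ hν)

theorem andPayment_congr (h1 : μ.map Prod.fst = μ'.map Prod.fst)
    (h2 : μ.map Prod.snd = μ'.map Prod.snd) (hμ : IsMixed v μ) (hμ' : IsMixed v μ')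
    (hν : IsMixed v ν) : andPayment T μ ν = andPayment T μ' ν := by
  have := hμ.1; have := hμ'.1; have := hν.1
  -- `q1 T a b` reads `a` only through `a.1`, so it is definitionally `q1 T (a.1, 0) b`.
  have item₁ := integral_prod_comp_congr (ν := ν) measurable_fst h1
    (φ := fun z : ℝ × Bid => z.1 * q1 T (z.1, 0) z.2) (by fun_prop)
  have item₂ := integral_prod_comp_congr (ν := ν) measurable_snd h2
    (φ := fun z : ℝ × Bid => z.1 * q2 T (0, z.1) z.2) (by fun_prop)
  rw [andPayment, andPayment, integral_add (integrable_fst_fst_mul_q1 hμ hν)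
    (integrable_fst_snd_mul_q2 hμ hν), integral_add (integrable_fst_fst_mul_q1 hμ' hν)
    (integrable_fst_snd_mul_q2 hμ' hν)]
  exact congrArg₂ (· + ·) item₁ item₂

theorem orPayment_congr (h1 : μ.map Prod.fst = μ'.map Prod.fst)
    (h2 : μ.map Prod.snd = μ'.map Prod.snd) (hμ : IsMixed v μ) (hμ' : IsMixed v μ')
    (hν : IsMixed v ν) : orPayment T μ ν = orPayment T μ' ν := by
  have := hμ.1; have := hμ'.1; have := hν.1
  have item₁ := integral_prod_comp_congr (ν := ν) measurable_fst h1
    (φ := fun z : ℝ × Bid => z.2.1 * (1 - q1 T (z.1, 0) z.2)) (by fun_prop)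
  have item₂ := integral_prod_comp_congr (ν := ν) measurable_snd h2
    (φ := fun z : ℝ × Bid => z.2.2 * (1 - q2 T (0, z.1) z.2)) (by fun_prop)
  rw [orPayment, orPayment, integral_add (integrable_snd_fst_mul_one_sub_q1 hμ hν)
    (integrable_snd_snd_mul_one_sub_q2 hμ hν), integral_add
    (integrable_snd_fst_mul_one_sub_q1 hμ' hν) (integrable_snd_snd_mul_one_sub_q2 hμ' hν)]
  exact congrArg₂ (· + ·) item₁ item₂

theorem IsMaxCorrelated.allocation_le [IsFiniteMeasure μ] [IsFiniteMeasure μ']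
    [IsFiniteMeasure ν] (h : IsMaxCorrelated μ μ') (h1 : μ.map Prod.fst = μ'.map Prod.fst)
    (h2 : μ.map Prod.snd = μ'.map Prod.snd) : allocation T μ ν ≤ allocation T μ' ν := by
  rw [allocation, allocation, integral_prod_symm _ (integrable_q1_mul_q2 T),
    integral_prod_symm _ (integrable_q1_mul_q2 T)]
  exact integral_mono (integrable_q1_mul_q2 T).integral_prod_right
    (integrable_q1_mul_q2 T).integral_prod_right fun b => h.integral_q1_mul_q2_le h1 h2 T b

theorem IsNash.UAnd_le (h : IsNash v T μ ν) (hκ : IsMixed v κ) : UAnd T κ ν ≤ UAnd T μ ν := by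
  obtain ⟨-, hν, hbest, -⟩ := h
  have := hκ.1; have := hν.1
  have hint : Integrable (fun p : Bid × Bid => uAnd T p.1 p.2) (κ.prod ν) :=
    ((integrable_q1_mul_q2 T).sub (integrable_fst_fst_mul_q1 hκ hν)).sub
      (integrable_fst_snd_mul_q2 hκ hν)
  calc UAnd T κ ν = ∫ a, ∫ b, uAnd T a b ∂ν ∂κ := integral_prod _ hint
    _ ≤ ∫ _, UAnd T μ ν ∂κ := integral_mono_ae hint.integral_prod_left (integrable_const _)
        (hκ.ae_mem_box.mono hbest)
    _ = UAnd T μ ν := by simp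

theorem integral_uOr_eq_UOr_dirac (v : ℝ) (T : TieRule) (κ : Measure Bid) [SFinite κ]
    (b : Bid) : ∫ a, uOr v T a b ∂κ = UOr v T κ (Measure.dirac b) := by
  have : Measurable fun p : Bid × Bid => uOr v T p.1 p.2 := by unfold uOr; fun_prop
  rw [UOr, Measure.prod_dirac, integral_map (by fun_prop) this.aestronglyMeasurable]

theorem IsMaxCorrelated.UAnd_le (h : IsMaxCorrelated μ μ')
    (h1 : μ.map Prod.fst = μ'.map Prod.fst) (h2 : μ.map Prod.snd = μ'.map Prod.snd)
    (hμ : IsMixed v μ) (hμ' : IsMixed v μ') (hν : IsMixed v ν) : UAnd T μ ν ≤ UAnd T μ' ν := by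
  have := hμ.1; have := hμ'.1; have := hν.1
  rw [UAnd_eq_allocation_sub_andPayment hμ hν, UAnd_eq_allocation_sub_andPayment hμ' hν,
    andPayment_congr h1 h2 hμ hμ' hν]
  exact sub_le_sub_right (h.allocation_le h1 h2) _

theorem IsMaxCorrelated.UOr_le (h : IsMaxCorrelated μ μ')
    (h1 : μ.map Prod.fst = μ'.map Prod.fst) (h2 : μ.map Prod.snd = μ'.map Prod.snd) (hv : 0 ≤ v)
    (hμ : IsMixed v μ) (hμ' : IsMixed v μ') (hν : IsMixed v ν) : UOr v T μ' ν ≤ UOr v T μ ν := by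
  have := hμ.1; have := hμ'.1; have := hν.1
  rw [UOr_eq_sub_allocation_sub_orPayment hμ hν, UOr_eq_sub_allocation_sub_orPayment hμ' hν,
    orPayment_congr h1 h2 hμ hμ' hν]
  gcongr
  exact h.allocation_le h1 h2

end Equilibrium

/-- If `(μ,ν)` is a mixed Nash equilibrium and `μ'` is a mixed strategy
with the same marginals as `μ` which is maximally correlated, then `(μ',ν)` is also a
mixed Nash equilibrium with the same utilities, allocation probability and payments. -/
theorem max_correlated_still_nash (v : ℝ) (hv : 1/2 < v) (T : TieRule)
    (μ μ' ν : Measure Bid) (h : IsNash v T μ ν) (hμ' : IsMixed v μ')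
    (h1 : Measure.map Prod.fst μ = Measure.map Prod.fst μ')
    (h2 : Measure.map Prod.snd μ = Measure.map Prod.snd μ')
    (hmax : ∀ x y : ℝ, μ' {p : Bid | p.1 ≤ x ∧ p.2 ≤ y} =
      min (μ {p : Bid | p.1 ≤ x}) (μ {p : Bid | p.2 ≤ y})) :
    IsNash v T μ' ν ∧
    UAnd T μ' ν = UAnd T μ ν ∧
    UOr v T μ' ν = UOr v T μ ν ∧
    (∫ p, q1 T p.1 p.2 * q2 T p.1 p.2 ∂(μ'.prod ν) =
      ∫ p, q1 T p.1 p.2 * q2 T p.1 p.2 ∂(μ.prod ν)) ∧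
    (∫ p, (p.1.1 * q1 T p.1 p.2 + p.1.2 * q2 T p.1 p.2) ∂(μ'.prod ν) =
      ∫ p, (p.1.1 * q1 T p.1 p.2 + p.1.2 * q2 T p.1 p.2) ∂(μ.prod ν)) ∧
    (∫ p, (p.2.1 * (1 - q1 T p.1 p.2) + p.2.2 * (1 - q2 T p.1 p.2)) ∂(μ'.prod ν) =
      ∫ p, (p.2.1 * (1 - q1 T p.1 p.2) + p.2.2 * (1 - q2 T p.1 p.2)) ∂(μ.prod ν)) := by
  have ⟨hμ, hν, hAnd, hOr⟩ := h
  have hcorr : IsMaxCorrelated μ μ' := hmax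
  have hUAnd : UAnd T μ' ν = UAnd T μ ν :=
    le_antisymm (h.UAnd_le hμ') (hcorr.UAnd_le h1 h2 hμ hμ' hν)
  have hPayAnd := andPayment_congr (T := T) h1 h2 hμ hμ' hν
  have hPayOr := orPayment_congr (T := T) h1 h2 hμ hμ' hν
  have hAlloc : allocation T μ' ν = allocation T μ ν := by
    have := UAnd_eq_allocation_sub_andPayment (T := T) hμ hν
    have := UAnd_eq_allocation_sub_andPayment (T := T) hμ' hν
    linarith
  have hUOr : UOr v T μ' ν = UOr v T μ ν := by
    rw [UOr_eq_sub_allocation_sub_orPayment hμ hν, UOr_eq_sub_allocation_sub_orPayment hμ' hν,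
      hAlloc, hPayOr]
  refine ⟨⟨hμ', hν, fun a ha => hUAnd ▸ hAnd a ha, fun b hb => ?_⟩, hUAnd, hUOr, hAlloc,
    hPayAnd.symm, hPayOr.symm⟩
  have := hμ.1; have := hμ'.1
  calc ∫ a, uOr v T a b ∂μ'
        = UOr v T μ' (Measure.dirac b) := integral_uOr_eq_UOr_dirac v T μ' b
    _ ≤ UOr v T μ (Measure.dirac b) :=
        hcorr.UOr_le h1 h2 (by linarith) hμ hμ' (isMixed_dirac hb)
    _ = ∫ a, uOr v T a b ∂μ := (integral_uOr_eq_UOr_dirac v T μ b).symm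
    _ ≤ UOr v T μ ν := hOr b hb
    _ = UOr v T μ' ν := hUOr.symm
end
end

section
/- The probability that the AND player wins both items in the equilibrium (μ*, ν*) satisfies: (i) for every real v > 1/2 with v ≠ 1, ∫ x in (0)..(1/2), ((v − 1/2)/(v − x)^2)·(x/(1 − x)) dx = ((v − 1/2)·Real.log (2 − 1/v) − (v − 1)/2)/(v − 1)^2; (ii) for v = 1, ∫ x in (0)..(1/2), x/(2·(1 − x)^3) dx = 1/4; and (iii) Filter.Tendsto (fun v : ℝ => v · ∫ x in (0)..(1/2), ((v − 1/2)/(v − x)^2)·(x/(1 − x)) dx) Filter.atTop (nhds (Real.log 2 − 1/2)). -/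
open MeasureTheory Set
open scoped ENNReal

noncomputable section

/-! Partial fractions give elementary antiderivatives of both integrands, so (i) and (ii) follow
from the fundamental theorem of calculus. For (iii), substituting `t = 1/v` turns `v` times the
closed form of (i) into `(1 - t/2)/(1 - t)^2 · log (2 - t) - 1/(2(1 - t))`, which is
continuous at `t = 0` with value `log 2 - 1/2`. -/

open Real Filter Topology

/-- `∫ F_and' · F_or` over the common support `[0, 1/2]` of the two equilibrium bids. -/
def andWinsProb (v : ℝ) : ℝ :=
  ∫ x in (0:ℝ)..(1/2), ((v - 1/2)/(v - x)^2) * (x/(1 - x))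

lemma le_half_of_mem_uIcc {x : ℝ} (hx : x ∈ uIcc 0 (1/2)) : x ≤ 1/2 :=
  hx.2.trans_eq (sup_of_le_right (by norm_num))

lemma hasDerivAt_andWins_antideriv {v x : ℝ} (hv : v ≠ 1) (hxv : x < v) (hx : x < 1) :
    HasDerivAt
      (fun x => (v - 1/2) * ((log (v - x) - log (1 - x)) / (v - 1)^2 - v / ((v - 1) * (v - x))))
      ((v - 1/2) / (v - x)^2 * (x / (1 - x))) x := by
  have hv' : v - 1 ≠ 0 := sub_ne_zero.mpr hv
  have hvx : v - x ≠ 0 := (sub_pos.mpr hxv).ne'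
  have h1x : 1 - x ≠ 0 := (sub_pos.mpr hx).ne'
  have dv : HasDerivAt (fun x => v - x) (-1) x := by simpa using (hasDerivAt_id x).const_sub v
  have d1 : HasDerivAt (fun x : ℝ => 1 - x) (-1) x := by simpa using (hasDerivAt_id x).const_sub 1
  have h := ((((dv.log hvx).sub (d1.log h1x)).div_const ((v - 1)^2)).sub
    ((hasDerivAt_const x v).div (dv.const_mul (v - 1)) (mul_ne_zero hv' hvx))).const_mul (v - 1/2)
  refine h.congr_deriv ?_
  field_simp
  ring

lemma intervalIntegrable_andWins {v : ℝ} (hv : 1/2 < v) :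
    IntervalIntegrable (fun x : ℝ => ((v - 1/2)/(v - x)^2) * (x/(1 - x))) volume 0 (1/2) := by
  refine ContinuousOn.intervalIntegrable fun x hx => ContinuousAt.continuousWithinAt ?_
  have hx := le_half_of_mem_uIcc hx
  have : (v - x)^2 ≠ 0 := pow_ne_zero 2 (by linarith)
  have : 1 - x ≠ 0 := by linarith
  fun_prop (disch := assumption)

theorem andWinsProb_eq {v : ℝ} (hv : 1/2 < v) (hv1 : v ≠ 1) :
    andWinsProb v = ((v - 1/2) * log (2 - 1/v) - (v - 1)/2)/(v - 1)^2 := by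
  rw [andWinsProb, intervalIntegral.integral_eq_sub_of_hasDerivAt
    (fun x hx => hasDerivAt_andWins_antideriv hv1 ((le_half_of_mem_uIcc hx).trans_lt hv)
      ((le_half_of_mem_uIcc hx).trans_lt (by norm_num))) (intervalIntegrable_andWins hv)]
  have hv0 : v ≠ 0 := by positivity
  have : v - 1 ≠ 0 := sub_ne_zero.mpr hv1
  have : v * 2 - 1 ≠ 0 := by linarith
  have hlog : log (2 - 1/v) = log (v - 1/2) - log (1 - 1/2) - log v := by
    rw [← log_div (by linarith) (by norm_num), ← log_div (by positivity) hv0]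
    congr 1
    field_simp
    ring
  simp only [sub_zero, log_one, hlog]
  generalize log (v - 1/2) = a, log (1 - 1/2) = b, log v = c
  field_simp
  ring

lemma hasDerivAt_andWins_antideriv_one {x : ℝ} (hx : x < 1) :
    HasDerivAt (fun x => (2 * x - 1) / (4 * (1 - x)^2)) (x / (2 * (1 - x)^3)) x := by
  have h1x : 1 - x ≠ 0 := (sub_pos.mpr hx).ne'
  have d1 : HasDerivAt (fun x : ℝ => 1 - x) (-1) x := by simpa using (hasDerivAt_id x).const_sub 1
  have h := (((hasDerivAt_id' x).const_mul 2).sub_const 1).div ((d1.fun_pow 2).const_mul 4)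
    (by positivity)
  refine h.congr_deriv ?_
  field_simp
  ring

theorem integral_andWins_one : ∫ x in (0:ℝ)..(1/2), x/(2*(1 - x)^3) = 1/4 := by
  rw [intervalIntegral.integral_eq_sub_of_hasDerivAt
    (fun x hx => hasDerivAt_andWins_antideriv_one ((le_half_of_mem_uIcc hx).trans_lt (by norm_num)))]
  · norm_num
  refine ContinuousOn.intervalIntegrable fun x hx => ContinuousAt.continuousWithinAt ?_
  have : 2 * (1 - x)^3 ≠ 0 :=
    mul_ne_zero two_ne_zero (pow_ne_zero 3 (by linarith [le_half_of_mem_uIcc hx]))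
  fun_prop (disch := assumption)

theorem tendsto_mul_andWinsProb :
    Tendsto (fun v => v * andWinsProb v) atTop (𝓝 (log 2 - 1/2)) := by
  set φ : ℝ → ℝ := fun t => (1 - t/2)/(1 - t)^2 * log (2 - t) - 1/(2*(1 - t))
  have hφ : Tendsto (fun v : ℝ => φ v⁻¹) atTop (𝓝 (log 2 - 1/2)) := by
    have hcont : ContinuousAt φ 0 := by fun_prop (disch := norm_num)
    have hφ0 : φ 0 = log 2 - 1/2 := by norm_num [φ]
    exact hφ0 ▸ hcont.tendsto.comp tendsto_inv_atTop_zero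
  refine hφ.congr' ?_
  filter_upwards [eventually_gt_atTop 1] with v hv
  have : v ≠ 0 := by positivity
  have : v - 1 ≠ 0 := by linarith
  rw [andWinsProb_eq (by linarith) hv.ne', one_div v]
  simp only [φ]
  generalize log (2 - v⁻¹) = L
  field_simp

/-- The probability that AND wins both items in the equilibrium
`(μ*, ν*)`: closed form for `v ≠ 1`, value `1/4` at `v = 1`, and asymptotics
`(ln 2 - 1/2)/v` as `v → ∞`. -/
theorem prob_and_wins :
    (∀ v : ℝ, 1/2 < v → v ≠ 1 →
      ∫ x in (0:ℝ)..(1/2), ((v - 1/2)/(v - x)^2) * (x/(1 - x)) =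
        ((v - 1/2) * Real.log (2 - 1/v) - (v - 1)/2)/(v - 1)^2) ∧
    (∫ x in (0:ℝ)..(1/2), x/(2*(1 - x)^3) = 1/4) ∧
    Filter.Tendsto
      (fun v : ℝ => v * ∫ x in (0:ℝ)..(1/2), ((v - 1/2)/(v - x)^2) * (x/(1 - x)))
      Filter.atTop (nhds (Real.log 2 - 1/2)) :=
  ⟨fun _ hv hv1 => andWinsProb_eq hv hv1, integral_andWins_one, tendsto_mul_andWinsProb⟩
end
end

section
/- The expected revenue from the OR player in the equilibrium (μ*, ν*) satisfies: (i) for every real v > 1/2 with v ≠ 1, ∫ x in (0)..(1/2), (x/(1 − x)^2)·((v − 1/2)/(v − x)) dx = ((v − 1/2)/(v − 1)^2)·(v − 1 − v·Real.log 2 + v·Real.log (v/(v − 1/2))); (ii) for v = 1, this integral equals 1/4; and (iii) Filter.Tendsto (fun v : ℝ => ∫ x in (0)..(1/2), (x/(1 − x)^2)·((v − 1/2)/(v − x)) dx) Filter.atTop (nhds (1 − Real.log 2)). -/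
open MeasureTheory Set
open scoped ENNReal

noncomputable section

/-!
For `v ≠ 1` the partial fraction decomposition
`x / ((1 - x)^2 (v - x)) = 1 / ((v - 1)(1 - x)^2) + v / (v - 1)^2 * (1 / (v - x) - 1 / (1 - x))`
integrates term by term to the closed form; at `v = 1` the integrand is
`(1 / (1 - x)^3 - 1 / (1 - x)^2) / 2`. As `v → ∞` the factor `(v - 1/2) / (v - x)` stays in
`(0, 1]` on `[0, 1/2]` and tends to `1`, so by dominated convergence the revenue tends to
`∫ x in 0..1/2, x / (1 - x)^2 = 1 - log 2`.
-/

open Filter Topology Real intervalIntegral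

section Revenue

variable {v : ℝ}

lemma lt_of_mem_uIcc_zero_half {x c : ℝ} (hc : 1/2 < c) (hx : x ∈ uIcc 0 (1/2)) : x < c := by
  rw [uIcc_of_le (by norm_num)] at hx
  linarith [hx.2]

lemma log_one_sub_half : log (1 - 1/2) = -log 2 := by
  rw [← log_inv]
  norm_num

lemma hasDerivAt_inv_one_sub {x : ℝ} (hx : x ≠ 1) :
    HasDerivAt (fun y => (1 - y)⁻¹) ((1 - x)⁻¹ ^ 2) x :=
  (((hasDerivAt_id' x).const_sub 1).inv (sub_ne_zero.2 hx.symm)).congr_deriv (by simp)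

lemma continuousOn_div_one_sub_sq : ContinuousOn (fun x : ℝ => x / (1 - x)^2) (uIcc 0 (1/2)) :=
  ContinuousOn.div (by fun_prop) (by fun_prop)
    fun x hx => pow_ne_zero 2 (sub_ne_zero.2 (lt_of_mem_uIcc_zero_half (by norm_num) hx).ne')

lemma continuousOn_revenue_integrand (hv : 1/2 < v) :
    ContinuousOn (fun x => (x/(1 - x)^2) * ((v - 1/2)/(v - x))) (uIcc 0 (1/2)) :=
  continuousOn_div_one_sub_sq.mul <| ContinuousOn.div (by fun_prop) (by fun_prop)
    fun x hx => (sub_pos.2 (lt_of_mem_uIcc_zero_half hv hx)).ne'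

lemma hasDerivAt_revenue_primitive (hv1 : v ≠ 1) {x : ℝ} (hx1 : x < 1) (hxv : x < v) :
    HasDerivAt
      (fun y => (v - 1/2) / (v - 1) * ((1 - y)⁻¹ + v / (v - 1) * (log (1 - y) - log (v - y))))
      ((x/(1 - x)^2) * ((v - 1/2)/(v - x))) x := by
  have h1 : 1 - x ≠ 0 := by linarith
  have h2 : v - x ≠ 0 := by linarith
  have h3 : v - 1 ≠ 0 := sub_ne_zero.2 hv1
  have hlog1 := ((hasDerivAt_id' x).const_sub 1).log h1
  have hlog2 := ((hasDerivAt_id' x).const_sub v).log h2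
  refine (((hasDerivAt_inv_one_sub hx1.ne).add
    ((hlog1.sub hlog2).const_mul (v / (v - 1)))).const_mul ((v - 1/2) / (v - 1))).congr_deriv ?_
  field_simp
  ring

lemma integral_revenue_of_ne_one (hv : 1/2 < v) (hv1 : v ≠ 1) :
    ∫ x in (0:ℝ)..(1/2), (x/(1 - x)^2) * ((v - 1/2)/(v - x)) =
      ((v - 1/2)/(v - 1)^2) * (v - 1 - v * log 2 + v * log (v/(v - 1/2))) := by
  rw [integral_eq_sub_of_hasDerivAt
    (fun x hx => hasDerivAt_revenue_primitive hv1 (lt_of_mem_uIcc_zero_half (by norm_num) hx)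
      (lt_of_mem_uIcc_zero_half hv hx))
    (continuousOn_revenue_integrand hv).intervalIntegrable]
  have h1 : v - 1 ≠ 0 := sub_ne_zero.2 hv1
  rw [log_div (by linarith) (by linarith), log_one_sub_half]
  norm_num
  field_simp
  ring

lemma hasDerivAt_revenue_primitive_one {x : ℝ} (hx : x ≠ 1) :
    HasDerivAt (fun y => ((1 - y)⁻¹ ^ 2 / 2 - (1 - y)⁻¹) / 2)
      ((x/(1 - x)^2) * (((1:ℝ) - 1/2)/(1 - x))) x := by
  have h1 : 1 - x ≠ 0 := sub_ne_zero.2 hx.symm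
  have h := hasDerivAt_inv_one_sub hx
  refine ((((h.pow 2).div_const 2).sub h).div_const 2).congr_deriv ?_
  norm_num
  field_simp
  ring

lemma integral_revenue_one :
    ∫ x in (0:ℝ)..(1/2), (x/(1 - x)^2) * (((1:ℝ) - 1/2)/(1 - x)) = 1/4 := by
  rw [integral_eq_sub_of_hasDerivAt
    (fun x hx => hasDerivAt_revenue_primitive_one (lt_of_mem_uIcc_zero_half (by norm_num) hx).ne)
    (continuousOn_revenue_integrand (by norm_num)).intervalIntegrable]
  norm_num

lemma hasDerivAt_inv_one_sub_add_log {x : ℝ} (hx : x ≠ 1) :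
    HasDerivAt (fun y => (1 - y)⁻¹ + log (1 - y)) (x / (1 - x)^2) x := by
  have h1 : 1 - x ≠ 0 := sub_ne_zero.2 hx.symm
  refine ((hasDerivAt_inv_one_sub hx).add (((hasDerivAt_id' x).const_sub 1).log h1)).congr_deriv ?_
  field_simp
  ring

lemma integral_div_one_sub_sq :
    ∫ x in (0:ℝ)..(1/2), x / (1 - x)^2 = 1 - log 2 := by
  rw [integral_eq_sub_of_hasDerivAt
    (fun x hx => hasDerivAt_inv_one_sub_add_log (lt_of_mem_uIcc_zero_half (by norm_num) hx).ne)
    continuousOn_div_one_sub_sq.intervalIntegrable]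
  rw [log_one_sub_half]
  norm_num
  ring

lemma tendsto_sub_div_sub_atTop (a b : ℝ) :
    Tendsto (fun v : ℝ => (v - a) / (v - b)) atTop (𝓝 1) := by
  have hden : Tendsto (fun v : ℝ => v - b) atTop atTop :=
    tendsto_atTop_add_const_right _ _ tendsto_id
  have h := (tendsto_const_nhds (x := (1:ℝ))).add (tendsto_const_nhds (x := b - a).div_atTop hden)
  rw [add_zero] at h
  refine h.congr' ?_
  filter_upwards [eventually_gt_atTop b] with v hv
  field_simp [(sub_pos.2 hv).ne']
  ring

lemma tendsto_integral_revenue_atTop :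
    Tendsto (fun v : ℝ => ∫ x in (0:ℝ)..(1/2), (x/(1 - x)^2) * ((v - 1/2)/(v - x))) atTop
      (𝓝 (∫ x in (0:ℝ)..(1/2), x / (1 - x)^2)) := by
  refine tendsto_integral_filter_of_dominated_convergence (fun x => x / (1 - x)^2)
    (Eventually.of_forall fun v => by fun_prop) ?_
    continuousOn_div_one_sub_sq.intervalIntegrable ?_
  · filter_upwards [eventually_gt_atTop (1/2)] with v hv
    refine Eventually.of_forall fun x hx => ?_
    rw [uIoc_of_le (by norm_num)] at hx
    have hbase : 0 ≤ x / (1 - x)^2 := div_nonneg hx.1.le (sq_nonneg _)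
    have hfactor : (v - 1/2) / (v - x) ≤ 1 :=
      div_le_one_of_le₀ (by linarith [hx.2]) (by linarith [hx.2])
    rw [norm_of_nonneg (mul_nonneg hbase (div_nonneg (by linarith) (by linarith [hx.2])))]
    exact mul_le_of_le_one_right hbase hfactor
  · exact Eventually.of_forall fun x _ => by
      simpa using tendsto_const_nhds.mul (tendsto_sub_div_sub_atTop (1/2) x)

end Revenue

/-- The expected revenue from the OR player in the equilibrium
`(μ*, ν*)`: closed form for `v ≠ 1`, value `1/4` at `v = 1`, and limit `1 - ln 2`
as `v → ∞`. -/
theorem revenue_from_or :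
    (∀ v : ℝ, 1/2 < v → v ≠ 1 →
      ∫ x in (0:ℝ)..(1/2), (x/(1 - x)^2) * ((v - 1/2)/(v - x)) =
        ((v - 1/2)/(v - 1)^2) *
          (v - 1 - v * Real.log 2 + v * Real.log (v/(v - 1/2)))) ∧
    (∫ x in (0:ℝ)..(1/2), (x/(1 - x)^2) * (((1:ℝ) - 1/2)/(1 - x)) = 1/4) ∧
    Filter.Tendsto
      (fun v : ℝ => ∫ x in (0:ℝ)..(1/2), (x/(1 - x)^2) * ((v - 1/2)/(v - x)))
      Filter.atTop (nhds (1 - Real.log 2)) := by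
  refine ⟨fun v hv hv1 => integral_revenue_of_ne_one hv hv1, integral_revenue_one, ?_⟩
  rw [← integral_div_one_sub_sq]
  exact tendsto_integral_revenue_atTop
end
end
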